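/- Let n ≥ 1, let A be an IFM of order n and let λ ∈ (0,1). For an index j, one has (A^m)μ s j → 1 and (A^m)ν s j → 0 as m → ∞ for every index s (powers taken with the ∗ operation; i.e., all entries in the j-th column of the limit matrix are ⟨1,0⟩) if and only if there is a critical path from a critical vertex to j. -/

import Mathlib

open Filter Topology

/-- Membership scalar operation of the convex combination of max-min and
maxarithmetic mean–minarithmetic mean: `x ⊛ y = λ·min(x,y) + (1-λ)·(x+y)/2`. -/
noncomputable def starMu (lam x y : ℝ) : ℝ :=
  lam * min x y + (1 - lam) * ((x + y) / 2)

/-- Non-membership scalar operation: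
`x ⊛' y = λ·max(x,y) + (1-λ)·(x+y)/2`. -/
noncomputable def starNu (lam x y : ℝ) : ℝ :=
  lam * max x y + (1 - lam) * ((x + y) / 2)

/-- `A` (given by membership part `Amu` and non-membership part `Anu`) is an
intuitionistic fuzzy matrix. -/
def IsIFM (n : ℕ) (Amu Anu : Fin n → Fin n → ℝ) : Prop :=
  ∀ i j, 0 ≤ Amu i j ∧ 0 ≤ Anu i j ∧ Amu i j + Anu i j ≤ 1

/-- Powers of an IFM under the convex combination `∗` of the max-min and the
maxarithmetic mean–minarithmetic mean operations: `A^1 = A`,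
`A^(k+1) = A^k ∗ A` with
`(X ∗ A)μ i j = max_t (Xμ i t ⊛ Aμ t j)` and
`(X ∗ A)ν i j = min_t (Xν i t ⊛' Aν t j)`.
(The value at `0` is irrelevant; it is set to `A`.) -/
noncomputable def sPow (n : ℕ) (lam : ℝ) (Amu Anu : Fin n → Fin n → ℝ) :
    ℕ → (Fin n → Fin n → ℝ) × (Fin n → Fin n → ℝ)
  | 0 => (Amu, Anu)
  | 1 => (Amu, Anu)
  | m + 2 =>
    let X := sPow n lam Amu Anu (m + 1)
    (fun i j => ⨆ t : Fin n, starMu lam (X.1 i t) (Amu t j),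
     fun i j => ⨅ t : Fin n, starNu lam (X.2 i t) (Anu t j))

/-- The edge `(i,j)` is critical: `Aμ i j = 1` and `Aν i j = 0`. -/
def CritEdge (n : ℕ) (Amu Anu : Fin n → Fin n → ℝ) (i j : Fin n) : Prop :=
  Amu i j = 1 ∧ Anu i j = 0

/-- `v` is a critical vertex: it lies on some critical circuit. -/
def CritVertex (n : ℕ) (Amu Anu : Fin n → Fin n → ℝ) (v : Fin n) : Prop :=
  ∃ h : ℕ, 1 ≤ h ∧ ∃ Q : Fin (h + 1) → Fin n,
    Q 0 = Q (Fin.last h) ∧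
    (∀ k : Fin h, CritEdge n Amu Anu (Q k.castSucc) (Q k.succ)) ∧ ∃ k, Q k = v

/-- There is a critical path (of some length `m ≥ 1`) from a critical vertex to `j`. -/
def CritPathTo (n : ℕ) (Amu Anu : Fin n → Fin n → ℝ) (j : Fin n) : Prop :=
  ∃ m : ℕ, 1 ≤ m ∧ ∃ P : Fin (m + 1) → Fin n,
    CritVertex n Amu Anu (P 0) ∧ P (Fin.last m) = j ∧
    ∀ k : Fin m, CritEdge n Amu Anu (P k.castSucc) (P k.succ)

/-!
Write `r = (1 + λ)/2 < 1`. Along a critical edge `(t, i)` one step of the power costs at most a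
factor `r`: `1 - (X ∗ A)μ s i ≤ r (1 - Xμ s t)` and `(X ∗ A)ν s i ≤ r Xν s t`. If `j` is reached
from a critical circuit of length `h`, walking around the circuit produces, for every large `m`,
a critical walk to `j` of length at least `m - h`, so `1 - (A^m)μ s j` and `(A^m)ν s j` are at
most `r ^ (m - h)`.

Conversely, a non-critical edge `(t, i)` keeps `1 - (X ∗ A)μ s i` above `(1 - λ)/2 · δ`, where
`δ > 0` is the least gap `1 - Aμ` over the non-critical edges. Hence an entry `(A^m)μ s j` closer
to `1` than `(1 - λ)/2 · δ · r ^ n` can only be reached along a critical walk of length `n`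
ending at `j`; such a walk repeats a vertex, which then lies on a critical circuit.
-/

section Scalar

variable {lam x y : ℝ}

lemma starMu_one_right (hx : x ≤ 1) : starMu lam x 1 = 1 - (1 + lam) / 2 * (1 - x) := by
  rw [starMu, min_eq_left hx]
  ring

lemma starNu_zero_right (hy : 0 ≤ y) : starNu lam y 0 = (1 + lam) / 2 * y := by
  rw [starNu, max_eq_left hy]
  ring

lemma mul_one_sub_le_one_sub_starMu (hlam : 0 ≤ lam) (hx : x ≤ 1) :
    (1 - lam) / 2 * (1 - y) ≤ 1 - starMu lam x y := by
  have := min_le_left x y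
  unfold starMu
  nlinarith

lemma starMu_mem_Icc (hlam : lam ∈ Set.Icc 0 1) (hx : x ∈ Set.Icc 0 1)
    (hy : y ∈ Set.Icc 0 1) : starMu lam x y ∈ Set.Icc 0 1 := by
  have hmin : min x y ∈ Set.Icc (0 : ℝ) 1 := ⟨le_min hx.1 hy.1, min_le_of_left_le hx.2⟩
  have hmean : (x + y) / 2 ∈ Set.Icc (0 : ℝ) 1 :=
    ⟨by linarith [hx.1, hy.1], by linarith [hx.2, hy.2]⟩
  simpa only [starMu, smul_eq_mul] using
    convex_Icc (0 : ℝ) 1 hmin hmean hlam.1 (sub_nonneg.2 hlam.2) (add_sub_cancel lam 1)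

lemma starNu_mem_Icc (hlam : lam ∈ Set.Icc 0 1) (hx : x ∈ Set.Icc 0 1)
    (hy : y ∈ Set.Icc 0 1) : starNu lam x y ∈ Set.Icc 0 1 := by
  have hmax : max x y ∈ Set.Icc (0 : ℝ) 1 := ⟨le_max_of_le_left hx.1, max_le hx.2 hy.2⟩
  have hmean : (x + y) / 2 ∈ Set.Icc (0 : ℝ) 1 :=
    ⟨by linarith [hx.1, hy.1], by linarith [hx.2, hy.2]⟩
  simpa only [starNu, smul_eq_mul] using
    convex_Icc (0 : ℝ) 1 hmax hmean hlam.1 (sub_nonneg.2 hlam.2) (add_sub_cancel lam 1)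

end Scalar

lemma exists_pos_le_one_sub_of_lt_one {ι : Type*} [Finite ι] (f : ι → ℝ) :
    ∃ δ > 0, ∀ i, f i < 1 → δ ≤ 1 - f i := by
  cases isEmpty_or_nonempty ι
  · exact ⟨1, one_pos, fun i => isEmptyElim i⟩
  let g i := if f i < 1 then 1 - f i else 1
  obtain ⟨i₀, hi₀⟩ := Finite.exists_min g
  refine ⟨g i₀, ?_, fun i hi => (hi₀ i).trans_eq (if_pos hi)⟩
  simp only [g]
  split_ifs <;> linarith

section Powers

variable {n m : ℕ} {lam : ℝ} {Amu Anu : Fin n → Fin n → ℝ}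

lemma IsIFM.mem_Icc (hA : IsIFM n Amu Anu) (i j : Fin n) :
    Amu i j ∈ Set.Icc 0 1 ∧ Anu i j ∈ Set.Icc 0 1 := by
  obtain ⟨h₁, h₂, h₃⟩ := hA i j
  exact ⟨⟨h₁, by linarith⟩, ⟨h₂, by linarith⟩⟩

lemma IsIFM.critEdge_of_eq_one (hA : IsIFM n Amu Anu) {i j : Fin n} (h : Amu i j = 1) :
    CritEdge n Amu Anu i j := by
  obtain ⟨-, h₂, h₃⟩ := hA i j
  exact ⟨h, by linarith⟩

lemma sPow_succ_fst (hm : 1 ≤ m) (s i : Fin n) :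
    (sPow n lam Amu Anu (m + 1)).1 s i =
      ⨆ t, starMu lam ((sPow n lam Amu Anu m).1 s t) (Amu t i) := by
  obtain ⟨k, rfl⟩ := Nat.exists_eq_add_of_le' hm
  rfl

lemma sPow_succ_snd (hm : 1 ≤ m) (s i : Fin n) :
    (sPow n lam Amu Anu (m + 1)).2 s i =
      ⨅ t, starNu lam ((sPow n lam Amu Anu m).2 s t) (Anu t i) := by
  obtain ⟨k, rfl⟩ := Nat.exists_eq_add_of_le' hm
  rfl

lemma exists_sPow_succ_fst_eq (hm : 1 ≤ m) (s i : Fin n) :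
    ∃ t, (sPow n lam Amu Anu (m + 1)).1 s i =
      starMu lam ((sPow n lam Amu Anu m).1 s t) (Amu t i) := by
  have : Nonempty (Fin n) := ⟨s⟩
  obtain ⟨t, ht⟩ := exists_eq_ciSup_of_finite
    (f := fun t => starMu lam ((sPow n lam Amu Anu m).1 s t) (Amu t i))
  exact ⟨t, (sPow_succ_fst hm s i).trans ht.symm⟩

lemma exists_sPow_succ_snd_eq (hm : 1 ≤ m) (s i : Fin n) :
    ∃ t, (sPow n lam Amu Anu (m + 1)).2 s i =
      starNu lam ((sPow n lam Amu Anu m).2 s t) (Anu t i) := by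
  have : Nonempty (Fin n) := ⟨s⟩
  obtain ⟨t, ht⟩ := exists_eq_ciInf_of_finite
    (f := fun t => starNu lam ((sPow n lam Amu Anu m).2 s t) (Anu t i))
  exact ⟨t, (sPow_succ_snd hm s i).trans ht.symm⟩

lemma starMu_le_sPow_succ_fst (hm : 1 ≤ m) (s t i : Fin n) :
    starMu lam ((sPow n lam Amu Anu m).1 s t) (Amu t i) ≤ (sPow n lam Amu Anu (m + 1)).1 s i :=
  (sPow_succ_fst hm s i).symm ▸ le_ciSup (f := fun t => starMu lam _ (Amu t i))
    (Finite.bddAbove_range _) t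

lemma sPow_succ_snd_le_starNu (hm : 1 ≤ m) (s t i : Fin n) :
    (sPow n lam Amu Anu (m + 1)).2 s i ≤ starNu lam ((sPow n lam Amu Anu m).2 s t) (Anu t i) :=
  (sPow_succ_snd hm s i).symm ▸ ciInf_le (f := fun t => starNu lam _ (Anu t i))
    (Finite.bddBelow_range _) t

lemma sPow_mem_Icc (hA : IsIFM n Amu Anu) (hlam : lam ∈ Set.Icc 0 1) :
    ∀ m (s i : Fin n), (sPow n lam Amu Anu m).1 s i ∈ Set.Icc 0 1 ∧
      (sPow n lam Amu Anu m).2 s i ∈ Set.Icc 0 1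
  | 0, s, i | 1, s, i => hA.mem_Icc s i
  | m + 2, s, i => by
    obtain ⟨t, ht⟩ := exists_sPow_succ_fst_eq (lam := lam) (Amu := Amu) (Anu := Anu)
      (Nat.le_add_left 1 _) s i
    obtain ⟨t', ht'⟩ := exists_sPow_succ_snd_eq (lam := lam) (Amu := Amu) (Anu := Anu)
      (Nat.le_add_left 1 _) s i
    rw [ht, ht']
    exact ⟨starMu_mem_Icc hlam (sPow_mem_Icc hA hlam _ s t).1 (hA.mem_Icc t i).1,
      starNu_mem_Icc hlam (sPow_mem_Icc hA hlam _ s t').2 (hA.mem_Icc t' i).2⟩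

end Powers

def CritWalk (n : ℕ) (Amu Anu : Fin n → Fin n → ℝ) : ℕ → Fin n → Fin n → Prop
  | 0, u, v => u = v
  | ℓ + 1, u, v => ∃ w, CritWalk n Amu Anu ℓ u w ∧ CritEdge n Amu Anu w v

section Walks

variable {n : ℕ} {Amu Anu : Fin n → Fin n → ℝ}

lemma CritWalk.append {a b : ℕ} {u v w : Fin n} (h₁ : CritWalk n Amu Anu a u v)
    (h₂ : CritWalk n Amu Anu b v w) : CritWalk n Amu Anu (a + b) u w := by
  induction b generalizing w with
  | zero => exact h₂ ▸ h₁
  | succ b ih =>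
    obtain ⟨x, hx, hxw⟩ := h₂
    exact ⟨x, ih hx, hxw⟩

lemma critWalk_of_path {ℓ : ℕ} (P : Fin (ℓ + 1) → Fin n)
    (hP : ∀ k : Fin ℓ, CritEdge n Amu Anu (P k.castSucc) (P k.succ)) {i k : Fin (ℓ + 1)}
    (hik : i ≤ k) : CritWalk n Amu Anu (k - i : ℕ) (P i) (P k) := by
  induction k using Fin.induction with
  | zero =>
    rw [nonpos_iff_eq_zero.1 hik, Nat.sub_self]
    rfl
  | succ k ih =>
    rcases hik.lt_or_eq with hlt | rfl
    · have hik' : i ≤ k.castSucc := Fin.le_castSucc_iff.2 hlt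
      have hlen : (k.succ - i : ℕ) = (k.castSucc - i : ℕ) + 1 := by
        rw [Fin.le_def, Fin.val_castSucc] at hik'
        rw [Fin.val_succ, Fin.val_castSucc]
        omega
      rw [hlen]
      exact ⟨_, ih hik', hP k⟩
    · rw [Nat.sub_self]
      rfl

lemma CritWalk.exists_path {ℓ : ℕ} {u v : Fin n} (h : CritWalk n Amu Anu ℓ u v) :
    ∃ P : Fin (ℓ + 1) → Fin n, P 0 = u ∧ P (Fin.last ℓ) = v ∧
      ∀ k : Fin ℓ, CritEdge n Amu Anu (P k.castSucc) (P k.succ) := by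
  induction ℓ generalizing v with
  | zero => exact ⟨fun _ => u, rfl, h, Fin.elim0⟩
  | succ ℓ ih =>
    obtain ⟨w, hw, hwv⟩ := h
    obtain ⟨P, hP0, hPw, hP⟩ := ih hw
    refine ⟨Fin.snoc P v, ?_, Fin.snoc_last _ _, Fin.lastCases ?_ fun k => ?_⟩
    · rw [← Fin.castSucc_zero, Fin.snoc_castSucc, hP0]
    · rwa [Fin.snoc_castSucc, Fin.succ_last, Fin.snoc_last, hPw]
    · rw [Fin.snoc_castSucc, Fin.succ_castSucc, Fin.snoc_castSucc]
      exact hP k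

lemma critVertex_iff {v : Fin n} :
    CritVertex n Amu Anu v ↔ ∃ h, 1 ≤ h ∧ CritWalk n Amu Anu h v v := by
  constructor
  · rintro ⟨h, hh, Q, hQ, hQe, k, rfl⟩
    have hround := (critWalk_of_path Q hQe (Fin.le_last k)).append
      (hQ ▸ critWalk_of_path Q hQe (Fin.zero_le k))
    refine ⟨h, hh, ?_⟩
    convert hround using 1
    simp only [Fin.val_last, Fin.val_zero]
    omega
  · rintro ⟨h, hh, hw⟩
    obtain ⟨P, hP0, hPv, hP⟩ := hw.exists_path
    exact ⟨h, hh, P, hP0.trans hPv.symm, hP, 0, hP0⟩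

lemma critPathTo_iff {j : Fin n} :
    CritPathTo n Amu Anu j ↔
      ∃ v p, CritVertex n Amu Anu v ∧ 1 ≤ p ∧ CritWalk n Amu Anu p v j := by
  constructor
  · rintro ⟨p, hp, P, hv, rfl, hP⟩
    exact ⟨P 0, p, hv, hp, by simpa using critWalk_of_path P hP (Fin.zero_le (Fin.last p))⟩
  · rintro ⟨v, p, hv, hp, hw⟩
    obtain ⟨P, rfl, rfl, hP⟩ := hw.exists_path
    exact ⟨p, hp, P, hv, rfl, hP⟩

lemma critPathTo_of_critWalk {ℓ : ℕ} {u j : Fin n} (hℓ : n ≤ ℓ)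
    (hw : CritWalk n Amu Anu ℓ u j) : CritPathTo n Amu Anu j := by
  obtain ⟨P, -, rfl, hP⟩ := hw.exists_path
  have hrepeat (a b : Fin (ℓ + 1)) (hab : a < b) (he : P a = P b) :
      CritPathTo n Amu Anu (P (Fin.last ℓ)) := by
    have hcycle := critWalk_of_path P hP hab.le
    rw [← he] at hcycle
    have hab' : (a : ℕ) < b := hab
    have hb : (b : ℕ) ≤ ℓ := Fin.is_le b
    refine critPathTo_iff.2 ⟨P a, _, critVertex_iff.2 ⟨_, by omega, hcycle⟩, ?_,
      critWalk_of_path P hP (Fin.le_last a)⟩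
    rw [Fin.val_last]
    omega
  obtain ⟨a, b, hne, he⟩ := Fintype.exists_ne_map_eq_of_card_lt
    (fun a : Fin (n + 1) => P (Fin.castLE (by omega) a)) (by simp)
  rcases hne.lt_or_gt with hab | hab
  · exact hrepeat _ _ ((Fin.castLE_lt_castLE_iff _).2 hab) he
  · exact hrepeat _ _ ((Fin.castLE_lt_castLE_iff _).2 hab) he.symm

end Walks

section Convergence

variable {n : ℕ} {lam : ℝ} {Amu Anu : Fin n → Fin n → ℝ}

lemma one_sub_sPow_succ_fst_le (hA : IsIFM n Amu Anu) (hlam : lam ∈ Set.Icc 0 1) {m : ℕ}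
    (hm : 1 ≤ m) {t i : Fin n} (he : CritEdge n Amu Anu t i) (s : Fin n) :
    1 - (sPow n lam Amu Anu (m + 1)).1 s i ≤
      (1 + lam) / 2 * (1 - (sPow n lam Amu Anu m).1 s t) := by
  have hstep := starMu_le_sPow_succ_fst (lam := lam) (Amu := Amu) (Anu := Anu) hm s t i
  rw [he.1, starMu_one_right (sPow_mem_Icc hA hlam m s t).1.2] at hstep
  linarith

lemma sPow_succ_snd_le (hA : IsIFM n Amu Anu) (hlam : lam ∈ Set.Icc 0 1) {m : ℕ}
    (hm : 1 ≤ m) {t i : Fin n} (he : CritEdge n Amu Anu t i) (s : Fin n) :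
    (sPow n lam Amu Anu (m + 1)).2 s i ≤ (1 + lam) / 2 * (sPow n lam Amu Anu m).2 s t := by
  have hstep := sPow_succ_snd_le_starNu (lam := lam) (Amu := Amu) (Anu := Anu) hm s t i
  rwa [he.2, starNu_zero_right (sPow_mem_Icc hA hlam m s t).2.1] at hstep

lemma CritWalk.one_sub_sPow_fst_le (hA : IsIFM n Amu Anu) (hlam : lam ∈ Set.Icc 0 1)
    {ℓ q : ℕ} {u v : Fin n} (hw : CritWalk n Amu Anu ℓ u v) (hq : 1 ≤ q) (s : Fin n) :
    1 - (sPow n lam Amu Anu (q + ℓ)).1 s v ≤ ((1 + lam) / 2) ^ ℓ := by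
  induction ℓ generalizing v with
  | zero =>
    subst hw
    simpa using (sPow_mem_Icc hA hlam q s u).1.1
  | succ ℓ ih =>
    obtain ⟨w, hw, hwv⟩ := hw
    calc 1 - (sPow n lam Amu Anu (q + ℓ + 1)).1 s v
        ≤ (1 + lam) / 2 * (1 - (sPow n lam Amu Anu (q + ℓ)).1 s w) :=
          one_sub_sPow_succ_fst_le hA hlam (by omega) hwv s
      _ ≤ (1 + lam) / 2 * ((1 + lam) / 2) ^ ℓ :=
          mul_le_mul_of_nonneg_left (ih hw) (by linarith [hlam.1])
      _ = ((1 + lam) / 2) ^ (ℓ + 1) := (pow_succ' _ _).symm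

lemma CritWalk.sPow_snd_le (hA : IsIFM n Amu Anu) (hlam : lam ∈ Set.Icc 0 1)
    {ℓ q : ℕ} {u v : Fin n} (hw : CritWalk n Amu Anu ℓ u v) (hq : 1 ≤ q) (s : Fin n) :
    (sPow n lam Amu Anu (q + ℓ)).2 s v ≤ ((1 + lam) / 2) ^ ℓ := by
  induction ℓ generalizing v with
  | zero =>
    subst hw
    simpa using (sPow_mem_Icc hA hlam q s u).2.2
  | succ ℓ ih =>
    obtain ⟨w, hw, hwv⟩ := hw
    calc (sPow n lam Amu Anu (q + ℓ + 1)).2 s v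
        ≤ (1 + lam) / 2 * (sPow n lam Amu Anu (q + ℓ)).2 s w :=
          sPow_succ_snd_le hA hlam (by omega) hwv s
      _ ≤ (1 + lam) / 2 * ((1 + lam) / 2) ^ ℓ :=
          mul_le_mul_of_nonneg_left (ih hw) (by linarith [hlam.1])
      _ = ((1 + lam) / 2) ^ (ℓ + 1) := (pow_succ' _ _).symm

lemma exists_critWalk_length_mem_Ico {h p m : ℕ} {v j : Fin n} (hh : 1 ≤ h)
    (hc : CritWalk n Amu Anu h v v) (hp : CritWalk n Amu Anu p v j) (hm : p < m) :
    ∃ ℓ ∈ Set.Ico (m - h) m, CritWalk n Amu Anu ℓ v j := by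
  induction m using Nat.strong_induction_on with
  | _ m ih =>
    by_cases hmp : m ≤ p + h
    · exact ⟨p, ⟨by omega, hm⟩, hp⟩
    obtain ⟨ℓ, ⟨hℓ₁, hℓ₂⟩, hw⟩ := ih (m - h) (by omega) (by omega)
    exact ⟨h + ℓ, ⟨by omega, by omega⟩, hc.append hw⟩

theorem tendsto_sPow_of_critPathTo (hA : IsIFM n Amu Anu) (hlam : lam ∈ Set.Ico 0 1)
    {j : Fin n} (hj : CritPathTo n Amu Anu j) (s : Fin n) :
    Tendsto (fun m => (sPow n lam Amu Anu m).1 s j) atTop (𝓝 1) ∧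
      Tendsto (fun m => (sPow n lam Amu Anu m).2 s j) atTop (𝓝 0) := by
  have hlam' := Set.Ico_subset_Icc_self hlam
  obtain ⟨v, p, hv, -, hp⟩ := critPathTo_iff.1 hj
  obtain ⟨h, hh, hc⟩ := critVertex_iff.1 hv
  have hr : Tendsto (fun m => ((1 + lam) / 2) ^ (m - h)) atTop (𝓝 0) :=
    (tendsto_pow_atTop_nhds_zero_of_lt_one (by linarith [hlam.1]) (by linarith [hlam.2])).comp
      (tendsto_sub_atTop_nat h)
  have hbound : ∀ᶠ m in atTop, 1 - (sPow n lam Amu Anu m).1 s j ≤ ((1 + lam) / 2) ^ (m - h) ∧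
      (sPow n lam Amu Anu m).2 s j ≤ ((1 + lam) / 2) ^ (m - h) := by
    filter_upwards [eventually_gt_atTop p] with m hm
    obtain ⟨ℓ, ⟨hℓ₁, hℓ₂⟩, hw⟩ := exists_critWalk_length_mem_Ico hh hc hp hm
    have hmono : ((1 + lam) / 2) ^ ℓ ≤ ((1 + lam) / 2) ^ (m - h) :=
      pow_le_pow_of_le_one (by linarith [hlam.1]) (by linarith [hlam.2]) hℓ₁
    have hμ := hw.one_sub_sPow_fst_le hA hlam' (q := m - ℓ) (by omega) s
    have hν := hw.sPow_snd_le hA hlam' (q := m - ℓ) (by omega) s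
    rw [Nat.sub_add_cancel hℓ₂.le] at hμ hν
    exact ⟨hμ.trans hmono, hν.trans hmono⟩
  constructor
  · refine tendsto_of_tendsto_of_tendsto_of_le_of_le' (by simpa using hr.const_sub 1)
      tendsto_const_nhds ?_ (.of_forall fun m => (sPow_mem_Icc hA hlam' m s j).1.2)
    filter_upwards [hbound] with m hm
    linarith [hm.1]
  · exact tendsto_of_tendsto_of_tendsto_of_le_of_le' tendsto_const_nhds hr
      (.of_forall fun m => (sPow_mem_Icc hA hlam' m s j).2.1) (hbound.mono fun m hm => hm.2)

end Convergence

section Limit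

variable {n : ℕ} {lam δ : ℝ} {Amu Anu : Fin n → Fin n → ℝ}

lemma exists_critEdge_of_one_sub_sPow_succ_lt (hA : IsIFM n Amu Anu)
    (hlam : lam ∈ Set.Icc 0 1) (hδ : ∀ a b, Amu a b < 1 → δ ≤ 1 - Amu a b) {m : ℕ}
    (hm : 1 ≤ m) {x : ℝ} (hx : x ≤ (1 - lam) / 2 * δ) {s i : Fin n}
    (h : 1 - (sPow n lam Amu Anu (m + 1)).1 s i < x) :
    ∃ t, CritEdge n Amu Anu t i ∧ (1 + lam) / 2 * (1 - (sPow n lam Amu Anu m).1 s t) < x := by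
  obtain ⟨t, ht⟩ := exists_sPow_succ_fst_eq (lam := lam) (Amu := Amu) (Anu := Anu) hm s i
  have hμ := (sPow_mem_Icc hA hlam m s t).1.2
  rw [ht] at h
  have hti : Amu t i = 1 := by
    by_contra hne
    have hgap := hδ t i ((hA.mem_Icc t i).1.2.lt_of_ne hne)
    have := mul_one_sub_le_one_sub_starMu (y := Amu t i) hlam.1 hμ
    nlinarith [hlam.2]
  rw [hti, starMu_one_right hμ] at h
  exact ⟨t, hA.critEdge_of_eq_one hti, by linarith⟩

lemma exists_critWalk_of_one_sub_sPow_lt (hA : IsIFM n Amu Anu) (hlam : lam ∈ Set.Icc 0 1)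
    (hδ₀ : 0 ≤ δ) (hδ : ∀ a b, Amu a b < 1 → δ ≤ 1 - Amu a b) (s : Fin n) (k : ℕ) :
    ∀ {m : ℕ} {i : Fin n}, 1 ≤ m → k ≤ m →
      1 - (sPow n lam Amu Anu m).1 s i < (1 - lam) / 2 * δ * ((1 + lam) / 2) ^ k →
        ∃ u, CritWalk n Amu Anu k u i := by
  obtain ⟨hlam₀, hlam₁⟩ := hlam
  have hr₀ : 0 < (1 + lam) / 2 := by linarith
  have hr_pow (e : ℕ) : ((1 + lam) / 2) ^ e ≤ 1 := pow_le_one₀ hr₀.le (by linarith)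
  have hc : 0 ≤ (1 - lam) / 2 * δ := mul_nonneg (by linarith) hδ₀
  induction k with
  | zero => exact fun _ _ _ => ⟨_, rfl⟩
  | succ k ih =>
    intro m i hm hkm h
    rcases hm.eq_or_lt with rfl | hm'
    · obtain rfl : k = 0 := by omega
      have hsi : Amu s i = 1 := by
        by_contra hne
        have hgap := hδ s i ((hA.mem_Icc s i).1.2.lt_of_ne hne)
        have : (1 - lam) / 2 * δ * ((1 + lam) / 2) ^ 1 ≤ δ := by nlinarith [hr_pow 1]
        exact (h.trans_le this).not_ge hgap
      exact ⟨s, s, rfl, hA.critEdge_of_eq_one hsi⟩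
    obtain ⟨m, rfl⟩ : ∃ m', m = m' + 1 := ⟨m - 1, by omega⟩
    obtain ⟨t, hti, ht⟩ := exists_critEdge_of_one_sub_sPow_succ_lt hA ⟨hlam₀, hlam₁⟩ hδ
      (by omega) (mul_le_of_le_one_right hc (hr_pow _)) h
    rw [pow_succ, ← mul_assoc, mul_comm _ ((1 + lam) / 2)] at ht
    obtain ⟨u, hu⟩ := ih (by omega) (by omega) (lt_of_mul_lt_mul_left ht hr₀.le)
    exact ⟨u, t, hu, hti⟩

theorem critPathTo_of_tendsto (hA : IsIFM n Amu Anu) (hlam : lam ∈ Set.Ico 0 1) {s j : Fin n}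
    (h : Tendsto (fun m => (sPow n lam Amu Anu m).1 s j) atTop (𝓝 1)) :
    CritPathTo n Amu Anu j := by
  obtain ⟨δ, hδ₀, hδ⟩ := exists_pos_le_one_sub_of_lt_one fun e : Fin n × Fin n => Amu e.1 e.2
  have hε : 0 < (1 - lam) / 2 * δ * ((1 + lam) / 2) ^ n :=
    mul_pos (mul_pos (by linarith [hlam.2]) hδ₀) (pow_pos (by linarith [hlam.1]) n)
  obtain ⟨m, hm, hmn⟩ := ((h.eventually (eventually_gt_nhds (sub_lt_self 1 hε))).and
    (eventually_ge_atTop (n + 1))).exists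
  obtain ⟨u, hu⟩ := exists_critWalk_of_one_sub_sPow_lt hA (Set.Ico_subset_Icc_self hlam)
    hδ₀.le (fun a b => hδ (a, b)) s n (m := m) (i := j) (by omega) (by omega) (by linarith)
  exact critPathTo_of_critWalk le_rfl hu

end Limit

theorem sPow_column_one_iff_critPath_general (n : ℕ)
    (Amu Anu : Fin n → Fin n → ℝ) (hA : IsIFM n Amu Anu)
    (lam : ℝ) (hlam : lam ∈ Set.Ioo (0 : ℝ) 1) (j : Fin n) :
    (∀ s : Fin n,
        Tendsto (fun m => (sPow n lam Amu Anu m).1 s j) atTop (𝓝 1) ∧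
        Tendsto (fun m => (sPow n lam Amu Anu m).2 s j) atTop (𝓝 0)) ↔
      CritPathTo n Amu Anu j :=
  have hlam' : lam ∈ Set.Ico 0 1 := Set.Ioo_subset_Ico_self hlam
  ⟨fun h => critPathTo_of_tendsto hA hlam' (h j).1, tendsto_sPow_of_critPathTo hA hlam'⟩

/-- Theorem 4.6: all entries of the `j`-th column of the limit of the powers of
`A` under the `∗` operation are `⟨1,0⟩` if and only if there is a critical path
from a critical vertex to `j`. -/
theorem sPow_column_one_iff_critPath (n : ℕ) (hn : 1 ≤ n)
    (Amu Anu : Fin n → Fin n → ℝ) (hA : IsIFM n Amu Anu)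
    (lam : ℝ) (hlam : lam ∈ Set.Ioo (0 : ℝ) 1) (j : Fin n) :
    (∀ s : Fin n,
        Tendsto (fun m => (sPow n lam Amu Anu m).1 s j) atTop (𝓝 1) ∧
        Tendsto (fun m => (sPow n lam Amu Anu m).2 s j) atTop (𝓝 0)) ↔
      CritPathTo n Amu Anu j :=
  sPow_column_one_iff_critPath_general n Amu Anu hA lam hlam j
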